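/- Let X be an infinite finitely supported subset of an invariant set Y. Then ℘_fs(℘_fin(X)), the set of finitely supported subsets of the finite powerset of X, contains an infinite uniformly supported subset; specifically, the family (X_i)_{i∈ℕ}, where X_i is the set of all i-element subsets of X, is an infinite family of distinct elements all supported by supp(X). -/

import Mathlib

open Pointwise

/-- The group of finitary permutations of the set `A` of atoms:
bijections of `A` that move only finitely many atoms. -/
def finPerm (A : Type*) : Subgroup (Equiv.Perm A) where
  carrier := {π | {a | π a ≠ a}.Finite}
  one_mem' := by simp
  mul_mem' := by
    intro π σ hπ hσ
    apply Set.Finite.subset (hπ.union hσ)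
    intro a ha
    by_contra hc
    simp only [Set.mem_union, Set.mem_setOf_eq, not_or, not_not] at hc
    exact ha (by simp [Equiv.Perm.mul_apply, hc.1, hc.2])
  inv_mem' := by
    intro π hπ
    apply Set.Finite.subset hπ
    intro a ha
    simp only [Set.mem_setOf_eq] at ha ⊢
    intro h
    exact ha (Equiv.Perm.inv_eq_iff_eq.mpr h.symm)

/-- `x` is finitely supported: some finite set of atoms supports it. -/
def FinitelySupported (A : Type*) {X : Type*} [MulAction (finPerm A) X] (x : X) : Prop :=
  ∃ S : Set A, S.Finite ∧ MulAction.Supports (finPerm A) S x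

/-- A subset `Z` of an `S_A`-set is uniformly supported if a single finite set
of atoms supports every element of `Z`. -/
def UniformlySupported (A : Type*) {X : Type*} [MulAction (finPerm A) X] (Z : Set X) : Prop :=
  ∃ S : Set A, S.Finite ∧ ∀ x ∈ Z, MulAction.Supports (finPerm A) S x

/-- The least support of `x`: the intersection of all finite sets of atoms supporting `x`. -/
noncomputable def supp (A : Type*) {X : Type*} [MulAction (finPerm A) X] (x : X) : Set A :=
  ⋂₀ {S : Set A | S.Finite ∧ MulAction.Supports (finPerm A) S x}

/-- `Z` contains no infinite uniformly supported subset
(`Z` is "FSM non-uniformly infinite"). -/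
def NoInfUS (A : Type*) {X : Type*} [MulAction (finPerm A) X] (Z : Set X) : Prop :=
  ∀ W ⊆ Z, UniformlySupported A W → W.Finite

/-- The uniform powerset `℘_us(X)`: all uniformly supported subsets of `X`. -/
def usPowerset (A : Type*) {X : Type*} [MulAction (finPerm A) X] (Z : Set X) : Set (Set X) :=
  {W | W ⊆ Z ∧ UniformlySupported A W}

/-- The finite powerset `℘_fin(X)`: all finite subsets of `X`. -/
def finPowerset {X : Type*} (Z : Set X) : Set (Set X) :=
  {W | W ⊆ Z ∧ W.Finite}

/-- `S` supports the function `f` on the domain `X` (Proposition 2.18'(2)):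
for every `π` fixing `S` pointwise and every `x ∈ X`, `π • x ∈ X` and
`f (π • x) = π • f x`. -/
def FnSupportsOn (A : Type*) {Y : Type*} [MulAction (finPerm A) Y]
    (X : Set Y) (S : Set A) (f : Y → Y) : Prop :=
  ∀ π : finPerm A, (∀ a ∈ S, π • a = a) → ∀ x ∈ X, π • x ∈ X ∧ f (π • x) = π • f x

/-- The least support of a function `f` with domain `X`. -/
noncomputable def fnSupp (A : Type*) {Y : Type*} [MulAction (finPerm A) Y]
    (X : Set Y) (f : Y → Y) : Set A :=
  ⋂₀ {S : Set A | S.Finite ∧ FnSupportsOn A X S f}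

open Equiv MulAction

/-! Finitary permutations fixing a set `T` pointwise are products of transpositions of atoms
outside `T`. A transposition of two atoms outside `S₁ ∩ S₂` is a product of three transpositions,
each of which moves only atoms outside `S₁` or only atoms outside `S₂`, via a fresh atom outside
`S₁ ∪ S₂`. Hence the intersection of two finite supports is a support, so every finitely supported
element has a least support `supp x`. A permutation fixing `supp X` fixes `X`, and hence fixes the
family `X_i` of `i`-element subsets of `X`; the `X_i` are pairwise distinct since the infinite set
`X` has finite subsets of every size. -/

theorem swap_mem_finPerm {A : Type*} [DecidableEq A] (a b : A) : swap a b ∈ finPerm A :=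
  finite_compl_fixedBy_swap

theorem mem_closure_swaps_fixing {α : Type*} [DecidableEq α] {T : Set α} {σ : Perm α}
    (hσ : (fixedBy α σ)ᶜ.Finite) (hT : ∀ a ∈ T, σ a = a) :
    σ ∈ Subgroup.closure {τ : Perm α | τ.IsSwap ∧ ∀ a ∈ T, τ a = a} := by
  refine (mem_closure_isSwap fun _ h => h.1).2 ⟨hσ, fun x => ?_⟩
  by_cases hx : σ x = x
  · rw [hx]; exact mem_orbit_self x
  have hxT : x ∉ T := fun h => hx (hT x h)
  have hσxT : σ x ∉ T := fun h => hx (σ.injective (hT _ h))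
  refine ⟨⟨swap x (σ x), Subgroup.subset_closure ⟨⟨x, σ x, Ne.symm hx, rfl⟩, fun a ha => ?_⟩⟩,
    swap_apply_left x (σ x)⟩
  exact swap_apply_of_ne_of_ne (by rintro rfl; exact hxT ha) (by rintro rfl; exact hσxT ha)

def permStabilizer (A : Type*) {Y : Type*} [MulAction (finPerm A) Y] (y : Y) :
    Subgroup (Perm A) :=
  (stabilizer (finPerm A) y).map (finPerm A).subtype

section Supports

variable {A Y : Type*} [MulAction (finPerm A) Y] {y : Y}

theorem mem_permStabilizer {σ : Perm A} :
    σ ∈ permStabilizer A y ↔ ∃ h : σ ∈ finPerm A, (⟨σ, h⟩ : finPerm A) • y = y := by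
  simp [permStabilizer]

theorem swap_mem_permStabilizer [DecidableEq A] {S : Set A} (hS : Supports (finPerm A) S y)
    {a b : A} (ha : a ∉ S) (hb : b ∉ S) : swap a b ∈ permStabilizer A y := by
  refine mem_permStabilizer.2 ⟨swap_mem_finPerm a b, hS _ fun c hc => ?_⟩
  exact swap_apply_of_ne_of_ne (by rintro rfl; exact ha hc) (by rintro rfl; exact hb hc)

theorem swap_mem_permStabilizer_of_supports_inter [Infinite A] [DecidableEq A] {S₁ S₂ : Set A}
    (hf₁ : S₁.Finite) (hf₂ : S₂.Finite) (h₁ : Supports (finPerm A) S₁ y)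
    (h₂ : Supports (finPerm A) S₂ y) {a b : A} (hab : a ≠ b)
    (ha : a ∉ S₁ ∩ S₂) (hb : b ∉ S₁ ∩ S₂) : swap a b ∈ permStabilizer A y := by
  obtain ⟨c, hc⟩ := ((hf₁.union hf₂).insert a).infinite_compl.nonempty
  simp only [Set.mem_compl_iff, Set.mem_insert_iff, Set.mem_union, not_or] at hc
  obtain ⟨hca, hc₁, hc₂⟩ := hc
  have fresh : ∀ u ∉ S₁ ∩ S₂, swap u c ∈ permStabilizer A y := by
    intro u hu
    by_cases hu₁ : u ∈ S₁
    · exact swap_mem_permStabilizer h₂ (fun hu₂ => hu ⟨hu₁, hu₂⟩) hc₂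
    · exact swap_mem_permStabilizer h₁ hu₁ hc₁
  rw [swap_comm, ← swap_mul_swap_mul_swap (Ne.symm hca) hab, swap_comm c b]
  exact mul_mem (mul_mem (fresh b hb) (fresh a ha)) (fresh b hb)

theorem MulAction.Supports.inter [Infinite A] {S₁ S₂ : Set A} (hf₁ : S₁.Finite) (hf₂ : S₂.Finite)
    (h₁ : Supports (finPerm A) S₁ y) (h₂ : Supports (finPerm A) S₂ y) :
    Supports (finPerm A) (S₁ ∩ S₂) y := by
  classical
  intro π hπ
  have hclosure : Subgroup.closure {τ : Perm A | τ.IsSwap ∧ ∀ a ∈ S₁ ∩ S₂, τ a = a} ≤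
      permStabilizer A y := by
    rw [Subgroup.closure_le]
    rintro τ ⟨⟨a, b, hab, rfl⟩, hτ⟩
    have hS : ∀ c, swap a b c ≠ c → c ∉ S₁ ∩ S₂ := fun c hc hcS => hc (hτ c hcS)
    exact swap_mem_permStabilizer_of_supports_inter hf₁ hf₂ h₁ h₂ hab
      (hS a (by simpa using hab.symm)) (hS b (by simpa using hab))
  obtain ⟨_, hπy⟩ := mem_permStabilizer.1 (hclosure (mem_closure_swaps_fixing π.2 hπ))
  exact hπy

theorem FinitelySupported.exists_least_support [Infinite A] (hy : FinitelySupported A y) :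
    ∃ T : Set A, T.Finite ∧ Supports (finPerm A) T y ∧
      ∀ S : Set A, S.Finite → Supports (finPerm A) S y → T ⊆ S := by
  obtain ⟨T, ⟨hTf, hT⟩, hmin⟩ := (InvImage.wf Set.ncard wellFounded_lt).has_min
    {S : Set A | S.Finite ∧ Supports (finPerm A) S y} hy
  refine ⟨T, hTf, hT, fun S hSf hS => ?_⟩
  by_contra hTS
  exact hmin (T ∩ S) ⟨hTf.inter_of_left S, hT.inter hTf hSf hS⟩
    (Set.ncard_lt_ncard (Set.inter_ssubset_left_iff.2 hTS) hTf)

theorem FinitelySupported.finite_supp_and_supports [Infinite A] (hy : FinitelySupported A y) :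
    (supp A y).Finite ∧ Supports (finPerm A) (supp A y) y := by
  obtain ⟨T, hTf, hT, hmin⟩ := hy.exists_least_support
  have hsupp : supp A y = T :=
    Set.Subset.antisymm (Set.sInter_subset_of_mem ⟨hTf, hT⟩)
      (Set.subset_sInter fun S hS => hmin S hS.1 hS.2)
  rw [hsupp]
  exact ⟨hTf, hT⟩

end Supports

def subsetsOfNCard {Y : Type*} (X : Set Y) (i : ℕ) : Set (Set Y) :=
  {Z : Set Y | Z ⊆ X ∧ Z.Finite ∧ Z.ncard = i}

section SubsetsOfNCard

variable {Y : Type*}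

theorem smul_subsetsOfNCard {G : Type*} [Group G] [MulAction G Y] (g : G) (X : Set Y) (i : ℕ) :
    g • subsetsOfNCard X i = subsetsOfNCard (g • X) i := by
  ext Z
  simp only [subsetsOfNCard, Set.mem_smul_set_iff_inv_smul_mem, Set.mem_ofPred_eq,
    Set.subset_smul_set_iff, Set.finite_smul_set, Set.ncard_smul_set]

theorem MulAction.Supports.subsetsOfNCard {G α : Type*} [Group G] [MulAction G Y] [SMul G α]
    {S : Set α} {X : Set Y} (hX : Supports G S X) (i : ℕ) : Supports G S (subsetsOfNCard X i) :=
  fun g hg => by rw [smul_subsetsOfNCard, hX g hg]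

theorem subsetsOfNCard_injective {X : Set Y} (hX : X.Infinite) :
    Function.Injective (subsetsOfNCard X) := by
  intro i j hij
  obtain ⟨t, htX, htcard⟩ := hX.exists_subset_card_eq i
  have ht : (t : Set Y) ∈ subsetsOfNCard X i := ⟨htX, t.finite_toSet, by simp [htcard]⟩
  rw [hij] at ht
  simpa [htcard] using ht.2.2

end SubsetsOfNCard

theorem stmt9_general {A Y : Type*} [Infinite A] [MulAction (finPerm A) Y]
    (X : Set Y) (hX : FinitelySupported A X) (hXinf : X.Infinite) :
    Function.Injective (fun i : ℕ => {Z : Set Y | Z ⊆ X ∧ Z.Finite ∧ Z.ncard = i}) ∧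
    (∀ i : ℕ, MulAction.Supports (finPerm A) (supp A X)
        ({Z : Set Y | Z ⊆ X ∧ Z.Finite ∧ Z.ncard = i} : Set (Set Y))) ∧
    (∀ i : ℕ, FinitelySupported A
        ({Z : Set Y | Z ⊆ X ∧ Z.Finite ∧ Z.ncard = i} : Set (Set Y)) ∧
      {Z : Set Y | Z ⊆ X ∧ Z.Finite ∧ Z.ncard = i} ⊆ finPowerset X) ∧
    (Set.range (fun i : ℕ => {Z : Set Y | Z ⊆ X ∧ Z.Finite ∧ Z.ncard = i})).Infinite ∧
    UniformlySupported A
      (Set.range (fun i : ℕ => {Z : Set Y | Z ⊆ X ∧ Z.Finite ∧ Z.ncard = i})) := by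
  obtain ⟨hfin, hsupp⟩ := hX.finite_supp_and_supports
  have hinj : Function.Injective (subsetsOfNCard X) := subsetsOfNCard_injective hXinf
  refine ⟨hinj, hsupp.subsetsOfNCard, fun i => ⟨⟨_, hfin, hsupp.subsetsOfNCard i⟩,
    fun Z hZ => ⟨hZ.1, hZ.2.1⟩⟩, Set.infinite_range_of_injective hinj, ⟨_, hfin, ?_⟩⟩
  rintro _ ⟨i, rfl⟩
  exact hsupp.subsetsOfNCard i

/-- for `X` an infinite finitely supported subset of an invariant set `Y`,
the family `(X_i)`, where `X_i` is the set of all `i`-element subsets of `X`, is an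
infinite family of distinct elements of `℘_fs(℘_fin(X))`, all supported by `supp(X)`;
hence `℘_fs(℘_fin(X))` contains an infinite uniformly supported subset. -/
theorem stmt9 {A Y : Type*} [Infinite A] [MulAction (finPerm A) Y]
    (hinv : ∀ y : Y, FinitelySupported A y) (X : Set Y)
    (hX : FinitelySupported A X) (hXinf : X.Infinite) :
    Function.Injective (fun i : ℕ => {Z : Set Y | Z ⊆ X ∧ Z.Finite ∧ Z.ncard = i}) ∧
    (∀ i : ℕ, MulAction.Supports (finPerm A) (supp A X)
        ({Z : Set Y | Z ⊆ X ∧ Z.Finite ∧ Z.ncard = i} : Set (Set Y))) ∧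
    (∀ i : ℕ, FinitelySupported A
        ({Z : Set Y | Z ⊆ X ∧ Z.Finite ∧ Z.ncard = i} : Set (Set Y)) ∧
      {Z : Set Y | Z ⊆ X ∧ Z.Finite ∧ Z.ncard = i} ⊆ finPowerset X) ∧
    (Set.range (fun i : ℕ => {Z : Set Y | Z ⊆ X ∧ Z.Finite ∧ Z.ncard = i})).Infinite ∧
    UniformlySupported A
      (Set.range (fun i : ℕ => {Z : Set Y | Z ⊆ X ∧ Z.Finite ∧ Z.ncard = i})) :=
  stmt9_general X hX hXinf
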